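/- Assume that every commit QC is preceded by a prepare QC in the same view for the same chain: for all views v and chains C, if there is a commit QC for C in view v then there is a prepare QC for C in view v. Suppose there are conflicting chains C₁ and C₂ and views v₁ and v₂ such that there is a commit QC for C₁ in view v₁ and a commit QC for C₂ in view v₂ (a safety violation). Then at least one third of the validators violate a slashing condition, i.e., 3 · |{ i : Fin n | i violates slashing condition 1 or i violates slashing condition 2 }| ≥ n. -/
import Mathlib


open scoped Classical

/-- The three HotStuff vote types. -/
inductive VoteType : Type
  | prepare
  | precommit
  | commit
  deriving DecidableEq

/-- Two chains conflict if neither is a prefix of the other. -/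
def Conflicting {α : Type*} (C C' : List α) : Prop := ¬ C <+: C' ∧ ¬ C' <+: C

/-- There is a quorum certificate of type `t` for chain `C` in view `v` if at least
two thirds of the validators cast the corresponding vote. -/
def QC {α : Type*} (n : ℕ) (vote : Fin n → VoteType → ℕ → List α → Prop)
    (t : VoteType) (v : ℕ) (C : List α) : Prop :=
  3 * (Finset.univ.filter (fun i => vote i t v C)).card ≥ 2 * n

/-- Slashing condition 1: voting for the same type and view more than once
(for two distinct chains). -/
def ViolatesSlash1 {α : Type*} (n : ℕ) (vote : Fin n → VoteType → ℕ → List α → Prop)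
    (i : Fin n) : Prop :=
  ∃ (t : VoteType) (v : ℕ) (C C' : List α), C ≠ C' ∧ vote i t v C ∧ vote i t v C'

/-- Slashing condition 2: first voting commit for `C` in view `v` and later voting
prepare for a conflicting chain `C'` in view `w > v`, unless in some intermediate
view there was a prepare QC for a chain conflicting with `C`. -/
def ViolatesSlash2 {α : Type*} (n : ℕ) (vote : Fin n → VoteType → ℕ → List α → Prop)
    (i : Fin n) : Prop :=
  ∃ (C C' : List α) (v w : ℕ), Conflicting C C' ∧ v < w ∧
    vote i VoteType.commit v C ∧ vote i VoteType.prepare w C' ∧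
    ¬ ∃ (u : ℕ) (C'' : List α), v < u ∧ u < w ∧ Conflicting C C'' ∧
        QC n vote VoteType.prepare u C''


lemma quorum_inter {n : ℕ} (A B : Finset (Fin n)) (hA : 3 * A.card ≥ 2 * n)
    (hB : 3 * B.card ≥ 2 * n) : 3 * (A ∩ B).card ≥ n := by
  have h1 := Finset.card_union_add_card_inter A B
  have h2 : (A ∪ B).card ≤ n := by simpa using Finset.card_le_univ (A ∪ B)
  omega

lemma key_lt {α : Type*} (n : ℕ) (vote : Fin n → VoteType → ℕ → List α → Prop)
    (hprep : ∀ (v : ℕ) (C : List α),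
      QC n vote VoteType.commit v C → QC n vote VoteType.prepare v C)
    (C₁ C₂ : List α) (v₁ v₂ : ℕ)
    (hconf : Conflicting C₁ C₂) (h12 : v₁ < v₂)
    (hQC₁ : QC n vote VoteType.commit v₁ C₁)
    (hQC₂ : QC n vote VoteType.commit v₂ C₂) :
    3 * (Finset.univ.filter
      (fun i => ViolatesSlash1 n vote i ∨ ViolatesSlash2 n vote i)).card ≥ n := by
  have hex : ∃ u, v₁ < u ∧ u ≤ v₂ ∧
      ∃ C, Conflicting C₁ C ∧ QC n vote VoteType.prepare u C :=
    ⟨v₂, h12, le_refl _, C₂, hconf, hprep v₂ C₂ hQC₂⟩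
  set u := Nat.find hex with hu
  obtain ⟨hu1, hu2, C', hC'conf, hQC'⟩ := Nat.find_spec hex
  set A := Finset.univ.filter (fun i => vote i VoteType.commit v₁ C₁) with hA
  set B := Finset.univ.filter (fun i => vote i VoteType.prepare u C') with hB
  have hsub : A ∩ B ⊆ Finset.univ.filter
      (fun i => ViolatesSlash1 n vote i ∨ ViolatesSlash2 n vote i) := by
    intro i hi
    rw [Finset.mem_inter, hA, hB, Finset.mem_filter, Finset.mem_filter] at hi
    refine Finset.mem_filter.2 ⟨Finset.mem_univ _, Or.inr ?_⟩
    refine ⟨C₁, C', v₁, u, hC'conf, hu1, hi.1.2, hi.2.2, ?_⟩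
    rintro ⟨u', C'', h1, h2, h3, h4⟩
    exact Nat.find_min hex h2 ⟨h1, h2.le.trans hu2, C'', h3, h4⟩
  calc 3 * (Finset.univ.filter
      (fun i => ViolatesSlash1 n vote i ∨ ViolatesSlash2 n vote i)).card
      ≥ 3 * (A ∩ B).card := by
        have := Finset.card_le_card hsub; omega
    _ ≥ n := quorum_inter A B hQC₁ hQC'

/-- Accountable safety of HotStuff: if commit QCs exist for two conflicting chains,
then at least one third of the validators violate a slashing condition. -/
theorem hotstuff_accountable_safety {α : Type*} (n : ℕ)
    (vote : Fin n → VoteType → ℕ → List α → Prop)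
    (hprep : ∀ (v : ℕ) (C : List α),
      QC n vote VoteType.commit v C → QC n vote VoteType.prepare v C)
    (C₁ C₂ : List α) (v₁ v₂ : ℕ)
    (hconf : Conflicting C₁ C₂)
    (hQC₁ : QC n vote VoteType.commit v₁ C₁)
    (hQC₂ : QC n vote VoteType.commit v₂ C₂) :
    3 * (Finset.univ.filter
      (fun i => ViolatesSlash1 n vote i ∨ ViolatesSlash2 n vote i)).card ≥ n := by
  rcases lt_trichotomy v₁ v₂ with h | h | h
  · exact key_lt n vote hprep C₁ C₂ v₁ v₂ hconf h hQC₁ hQC₂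
  · subst h
    have hne : C₁ ≠ C₂ := fun h => hconf.1 (h ▸ List.prefix_refl _)
    set A := Finset.univ.filter (fun i => vote i VoteType.commit v₁ C₁) with hA
    set B := Finset.univ.filter (fun i => vote i VoteType.commit v₁ C₂) with hB
    have hsub : A ∩ B ⊆ Finset.univ.filter
        (fun i => ViolatesSlash1 n vote i ∨ ViolatesSlash2 n vote i) := by
      intro i hi
      rw [Finset.mem_inter, hA, hB, Finset.mem_filter, Finset.mem_filter] at hi
      exact Finset.mem_filter.2 ⟨Finset.mem_univ _,
        Or.inl ⟨VoteType.commit, v₁, C₁, C₂, hne, hi.1.2, hi.2.2⟩⟩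
    have h1 := Finset.card_le_card hsub
    have h2 := quorum_inter A B hQC₁ hQC₂
    omega
  · exact key_lt n vote hprep C₂ C₁ v₂ v₁ ⟨hconf.2, hconf.1⟩ h hQC₂ hQC₁
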